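/- (van der Sluis) Let A ∈ ℝ^{m×n} have full column rank and let D = diag(‖a_1‖^{-1}, ..., ‖a_n‖^{-1}), where a_i is the i-th column of A. Then κ(AD) ≤ √n · min over all invertible diagonal matrices D_0 of κ(A D_0), where κ is the 2-norm condition number. -/

import Mathlib

open Matrix

noncomputable def eigs {m : ℕ} (A : Matrix (Fin m) (Fin m) ℝ) : Set ℝ :=
  {μ | ∃ v : Fin m → ℝ, v ≠ 0 ∧ A.mulVec v = μ • v}

noncomputable def lamMax {m : ℕ} (A : Matrix (Fin m) (Fin m) ℝ) : ℝ := sSup (eigs A)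

noncomputable def lamMin {m : ℕ} (A : Matrix (Fin m) (Fin m) ℝ) : ℝ := sInf (eigs A)

/-- 2-norm condition number σ_max/σ_min of a full column rank matrix -/
noncomputable def condFull {m n : ℕ} (A : Matrix (Fin m) (Fin n) ℝ) : ℝ :=
  Real.sqrt (lamMax (Aᵀ * A) / lamMin (Aᵀ * A))

/-!
Let `B` have unit columns and let `C = B * diagonal d`. By Cauchy–Schwarz, `λ_max(BᵀB)` is at most
the squared Frobenius norm of `B`, which is `n`. If `d_k` has the largest modulus, the column
`c_k = d_k b_k` has squared norm `d_k²`, so `λ_max(CᵀC) ≥ d_k²`. Since `B = C * diagonal d⁻¹`,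
`λ_min(BᵀB) ≥ d_k⁻² λ_min(CᵀC)`. Dividing gives `κ(B)² ≤ n κ(C)²`, and the column-normalised `A D`
is such a `B`, with every `A D₀` of the form `C`.
-/

open scoped MatrixOrder

lemma dotProduct_self_pos {ι : Type*} [Fintype ι] {v : ι → ℝ} (hv : v ≠ 0) : 0 < v ⬝ᵥ v :=
  (Finset.sum_nonneg fun i _ ↦ mul_self_nonneg (v i)).lt_of_ne
    (Ne.symm (dotProduct_self_eq_zero.not.mpr hv))

section Eigenvalues

variable {n : ℕ} {M : Matrix (Fin n) (Fin n) ℝ}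

lemma eigs_eq_spectrum (M : Matrix (Fin n) (Fin n) ℝ) : eigs M = spectrum ℝ M := by
  ext μ
  rw [← Matrix.spectrum_toLin', ← Module.End.hasEigenvalue_iff_mem_spectrum]
  constructor
  · rintro ⟨v, hv, hMv⟩
    exact Module.End.hasEigenvalue_of_hasEigenvector ⟨Module.End.mem_eigenspace_iff.mpr hMv, hv⟩
  · intro h
    obtain ⟨v, hv, hv0⟩ := h.exists_hasEigenvector
    exact ⟨v, hv0, Module.End.mem_eigenspace_iff.mp hv⟩

lemma eigs_of_fin_zero (M : Matrix (Fin 0) (Fin 0) ℝ) : eigs M = ∅ :=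
  Set.eq_empty_of_forall_notMem fun _ ⟨v, hv, _⟩ ↦ hv (Subsingleton.elim v 0)

lemma eigs_finite (M : Matrix (Fin n) (Fin n) ℝ) : (eigs M).Finite :=
  eigs_eq_spectrum M ▸ M.finite_spectrum

lemma eigs_nonempty [NeZero n] (hM : M.IsHermitian) : (eigs M).Nonempty := by
  rw [eigs_eq_spectrum, hM.spectrum_real_eq_range_eigenvalues]
  exact Set.range_nonempty _

lemma dotProduct_mulVec_le_lamMax_mul (hM : M.IsHermitian) (v : Fin n → ℝ) :
    v ⬝ᵥ (M *ᵥ v) ≤ lamMax M * (v ⬝ᵥ v) := by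
  have hle : M ≤ algebraMap ℝ _ (lamMax M) := by
    refine le_algebraMap_of_spectrum_le (fun μ hμ ↦ ?_) hM
    rw [← eigs_eq_spectrum] at hμ
    exact le_csSup (eigs_finite M).bddAbove hμ
  simpa only [Algebra.algebraMap_eq_smul_one, sub_mulVec, smul_mulVec, one_mulVec, star_trivial,
    dotProduct_sub, dotProduct_smul, smul_eq_mul, sub_nonneg]
    using (Matrix.le_iff.mp hle).dotProduct_mulVec_nonneg v

lemma lamMin_mul_le_dotProduct_mulVec (hM : M.IsHermitian) (v : Fin n → ℝ) :
    lamMin M * (v ⬝ᵥ v) ≤ v ⬝ᵥ (M *ᵥ v) := by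
  have hle : algebraMap ℝ _ (lamMin M) ≤ M := by
    refine algebraMap_le_of_le_spectrum (fun μ hμ ↦ ?_) hM
    rw [← eigs_eq_spectrum] at hμ
    exact csInf_le (eigs_finite M).bddBelow hμ
  simpa only [Algebra.algebraMap_eq_smul_one, sub_mulVec, smul_mulVec, one_mulVec, star_trivial,
    dotProduct_sub, dotProduct_smul, smul_eq_mul, sub_nonneg]
    using (Matrix.le_iff.mp hle).dotProduct_mulVec_nonneg v

lemma lamMax_le_of_forall_dotProduct_mulVec_le {c : ℝ} (hne : (eigs M).Nonempty)
    (h : ∀ v, v ⬝ᵥ (M *ᵥ v) ≤ c * (v ⬝ᵥ v)) : lamMax M ≤ c := by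
  refine csSup_le hne fun μ ⟨v, hv, hMv⟩ ↦ ?_
  have := h v
  rw [hMv, dotProduct_smul, smul_eq_mul] at this
  exact le_of_mul_le_mul_right this (dotProduct_self_pos hv)

lemma le_lamMin_of_forall_le_dotProduct_mulVec {c : ℝ} (hne : (eigs M).Nonempty)
    (h : ∀ v, c * (v ⬝ᵥ v) ≤ v ⬝ᵥ (M *ᵥ v)) : c ≤ lamMin M := by
  refine le_csInf hne fun μ ⟨v, hv, hMv⟩ ↦ ?_
  have := h v
  rw [hMv, dotProduct_smul, smul_eq_mul] at this
  exact le_of_mul_le_mul_right this (dotProduct_self_pos hv)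

end Eigenvalues

section Gram

variable {m n : ℕ} (X : Matrix (Fin m) (Fin n) ℝ)

lemma isHermitian_transpose_mul_self : (Xᵀ * X).IsHermitian := by
  simpa only [conjTranspose_eq_transpose_of_trivial] using isHermitian_conjTranspose_mul_self X

lemma dotProduct_transpose_mul_self_mulVec (v : Fin n → ℝ) :
    v ⬝ᵥ ((Xᵀ * X) *ᵥ v) = (X *ᵥ v) ⬝ᵥ (X *ᵥ v) := by
  rw [← mulVec_mulVec, dotProduct_mulVec, vecMul_transpose]

lemma mulVec_dotProduct_self_le (v : Fin n → ℝ) :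
    (X *ᵥ v) ⬝ᵥ (X *ᵥ v) ≤ (∑ i, ∑ j, X i j ^ 2) * (v ⬝ᵥ v) := by
  have hv : v ⬝ᵥ v = ∑ j, v j ^ 2 := by simp only [dotProduct, sq]
  rw [hv, Finset.sum_mul]
  refine Finset.sum_le_sum fun i _ ↦ ?_
  simpa only [mulVec, dotProduct, ← sq] using Finset.sum_mul_sq_le_sq_mul_sq _ (X i) v

lemma lamMax_transpose_mul_self_le_sum_sq [NeZero n] :
    lamMax (Xᵀ * X) ≤ ∑ i, ∑ j, X i j ^ 2 :=
  lamMax_le_of_forall_dotProduct_mulVec_le (eigs_nonempty (isHermitian_transpose_mul_self X))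
    fun v ↦ dotProduct_transpose_mul_self_mulVec X v ▸ mulVec_dotProduct_self_le X v

lemma sum_sq_le_lamMax_transpose_mul_self (j : Fin n) :
    ∑ i, X i j ^ 2 ≤ lamMax (Xᵀ * X) := by
  have := dotProduct_mulVec_le_lamMax_mul (isHermitian_transpose_mul_self X) (Pi.single j 1)
  rw [dotProduct_transpose_mul_self_mulVec, mulVec_single_one, dotProduct_single, Pi.single_eq_same,
    mul_one, mul_one] at this
  simpa only [dotProduct, col_apply, sq] using this

lemma lamMin_transpose_mul_self_pos [NeZero n] (hX : Function.Injective X.mulVec) :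
    0 < lamMin (Xᵀ * X) := by
  have hne := eigs_nonempty (isHermitian_transpose_mul_self X)
  obtain ⟨v, hv, hXv⟩ := hne.csInf_mem (eigs_finite _)
  have hpos : 0 < (X *ᵥ v) ⬝ᵥ (X *ᵥ v) :=
    dotProduct_self_pos fun h ↦ hv (hX (h.trans (mulVec_zero X).symm))
  rw [← dotProduct_transpose_mul_self_mulVec, hXv, dotProduct_smul, smul_eq_mul] at hpos
  exact pos_of_mul_pos_left hpos (dotProduct_self_pos hv).le

lemma mul_lamMin_le_lamMin_mul_diagonal [NeZero n] {d : Fin n → ℝ} {ε : ℝ}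
    (hε : ∀ j, ε ≤ d j ^ 2) (hX : 0 ≤ lamMin (Xᵀ * X)) :
    ε * lamMin (Xᵀ * X) ≤ lamMin ((X * diagonal d)ᵀ * (X * diagonal d)) := by
  refine le_lamMin_of_forall_le_dotProduct_mulVec
    (eigs_nonempty (isHermitian_transpose_mul_self _)) fun v ↦ ?_
  have hscale : ε * (v ⬝ᵥ v) ≤ (d * v) ⬝ᵥ (d * v) := by
    simp only [dotProduct, Finset.mul_sum, Pi.mul_apply]
    exact Finset.sum_le_sum fun j _ ↦ by nlinarith [hε j, mul_self_nonneg (v j)]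
  calc ε * lamMin (Xᵀ * X) * (v ⬝ᵥ v) = lamMin (Xᵀ * X) * (ε * (v ⬝ᵥ v)) := by ring
    _ ≤ lamMin (Xᵀ * X) * ((d * v) ⬝ᵥ (d * v)) := mul_le_mul_of_nonneg_left hscale hX
    _ ≤ (d * v) ⬝ᵥ ((Xᵀ * X) *ᵥ (d * v)) :=
      lamMin_mul_le_dotProduct_mulVec (isHermitian_transpose_mul_self X) _
    _ = v ⬝ᵥ (((X * diagonal d)ᵀ * (X * diagonal d)) *ᵥ v) := by
      rw [dotProduct_transpose_mul_self_mulVec, dotProduct_transpose_mul_self_mulVec,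
        ← mulVec_mulVec, show diagonal d *ᵥ v = d * v from funext (mulVec_diagonal d v)]

end Gram

section Scaling

variable {m n : ℕ}

lemma mul_diagonal_mul_diagonal_div (X : Matrix (Fin m) (Fin n) ℝ) {d : Fin n → ℝ}
    (hd : ∀ j, d j ≠ 0) (e : Fin n → ℝ) :
    X * diagonal d * diagonal (e / d) = X * diagonal e := by
  rw [Matrix.mul_assoc, diagonal_mul_diagonal]
  congr 2
  exact funext fun j ↦ mul_div_cancel₀ (e j) (hd j)

lemma mulVec_injective_mul_diagonal {X : Matrix (Fin m) (Fin n) ℝ}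
    (hX : Function.Injective X.mulVec) {d : Fin n → ℝ} (hd : ∀ j, d j ≠ 0) :
    Function.Injective (X * diagonal d).mulVec := by
  have hD : Function.Injective (diagonal d).mulVec :=
    mulVec_injective_iff_isUnit.mpr <|
      isUnit_diagonal.mpr (Pi.isUnit_iff.mpr fun j ↦ (hd j).isUnit)
  have hcomp : (X * diagonal d).mulVec = X.mulVec ∘ (diagonal d).mulVec :=
    funext fun v ↦ (mulVec_mulVec v X _).symm
  exact hcomp ▸ hX.comp hD

lemma mulVec_injective_of_rank_eq {X : Matrix (Fin m) (Fin n) ℝ} (hX : X.rank = n) :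
    Function.Injective X.mulVec := by
  have hker := LinearMap.finrank_range_add_finrank_ker X.mulVecLin
  rw [← Matrix.rank, hX, Module.finrank_fin_fun] at hker
  have : LinearMap.ker X.mulVecLin = ⊥ := Submodule.finrank_eq_zero.mp (by omega)
  exact LinearMap.ker_eq_bot.mp this

theorem condFull_le_sqrt_mul_condFull_mul_diagonal [NeZero n] (B : Matrix (Fin m) (Fin n) ℝ)
    (hB : Function.Injective B.mulVec) (hcol : ∀ j, ∑ i, B i j ^ 2 = 1)
    {d : Fin n → ℝ} (hd : ∀ j, d j ≠ 0) :
    condFull B ≤ Real.sqrt n * condFull (B * diagonal d) := by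
  set C := B * diagonal d
  obtain ⟨k, -, hk⟩ := Finset.exists_min_image Finset.univ (fun j ↦ (d j)⁻¹ ^ 2)
    Finset.univ_nonempty
  set ε := (d k)⁻¹ ^ 2
  have hε : 0 < ε := by positivity [hd k]
  have hCmin : 0 < lamMin (Cᵀ * C) :=
    lamMin_transpose_mul_self_pos C (mulVec_injective_mul_diagonal hB hd)
  have hBmax : lamMax (Bᵀ * B) ≤ n := by
    simpa only [Finset.sum_comm (f := fun i j ↦ B i j ^ 2), hcol, Finset.sum_const,
      Finset.card_univ, Fintype.card_fin, nsmul_eq_mul, mul_one]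
      using lamMax_transpose_mul_self_le_sum_sq B
  have hCmax : 1 ≤ ε * lamMax (Cᵀ * C) := by
    have hcolC : ∑ i, C i k ^ 2 = d k ^ 2 := by
      simp only [C, mul_diagonal, mul_pow, ← Finset.sum_mul, hcol, one_mul]
    calc 1 = ε * ∑ i, C i k ^ 2 := by
          simp only [ε, hcolC, ← mul_pow, inv_mul_cancel₀ (hd k), one_pow]
      _ ≤ ε * lamMax (Cᵀ * C) :=
        mul_le_mul_of_nonneg_left (sum_sq_le_lamMax_transpose_mul_self C k) hε.le
  have hBmin : ε * lamMin (Cᵀ * C) ≤ lamMin (Bᵀ * B) := by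
    have := mul_lamMin_le_lamMin_mul_diagonal C (d := d⁻¹) (fun j ↦ hk j (Finset.mem_univ j))
      hCmin.le
    rwa [← one_div, mul_diagonal_mul_diagonal_div B hd, Pi.one_def, diagonal_one,
      Matrix.mul_one] at this
  have hratio : lamMax (Bᵀ * B) / lamMin (Bᵀ * B) ≤ n * (lamMax (Cᵀ * C) / lamMin (Cᵀ * C)) :=
    calc lamMax (Bᵀ * B) / lamMin (Bᵀ * B) ≤ n / (ε * lamMin (Cᵀ * C)) :=
          div_le_div₀ n.cast_nonneg hBmax (by positivity) hBmin
      _ ≤ n * (ε * lamMax (Cᵀ * C)) / (ε * lamMin (Cᵀ * C)) := by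
          gcongr; exact le_mul_of_one_le_right n.cast_nonneg hCmax
      _ = n * (lamMax (Cᵀ * C) / lamMin (Cᵀ * C)) := by field_simp
  rw [condFull, condFull, ← Real.sqrt_mul n.cast_nonneg]
  exact Real.sqrt_le_sqrt hratio

end Scaling

/-- van der Sluis: scaling the columns of a full column rank matrix to unit norm
yields a condition number within √n of the optimal diagonal scaling. -/
theorem stmt5 {m n : ℕ} (A : Matrix (Fin m) (Fin n) ℝ) (hrank : A.rank = n)
    (hcol : ∀ j, (∑ i, (A i j) ^ 2) ≠ 0)
    (D : Fin n → ℝ) (hD : ∀ j, D j = (Real.sqrt (∑ i, (A i j) ^ 2))⁻¹) :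
    condFull (A * Matrix.diagonal D) ≤
      Real.sqrt n *
        sInf {c | ∃ d : Fin n → ℝ, (∀ j, d j ≠ 0) ∧ c = condFull (A * Matrix.diagonal d)} := by
  rcases Nat.eq_zero_or_pos n with rfl | hn
  · -- both sides are `0`: with no eigenvalues, `lamMax = sSup ∅ = 0`
    simp [condFull, lamMax, lamMin, eigs_of_fin_zero]
  have : NeZero n := ⟨hn.ne'⟩
  have hpos : ∀ j, 0 < ∑ i, A i j ^ 2 := fun j ↦
    (Finset.sum_nonneg fun i _ ↦ sq_nonneg (A i j)).lt_of_ne' (hcol j)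
  have hD0 : ∀ j, D j ≠ 0 := fun j ↦ hD j ▸ (inv_pos.mpr (Real.sqrt_pos.mpr (hpos j))).ne'
  have hunit : ∀ j, ∑ i, (A * diagonal D) i j ^ 2 = 1 := fun j ↦ by
    simp only [mul_diagonal, mul_pow, ← Finset.sum_mul, hD, inv_pow, Real.sq_sqrt (hpos j).le,
      mul_inv_cancel₀ (hcol j)]
  have hinj := mulVec_injective_mul_diagonal (mulVec_injective_of_rank_eq hrank) hD0
  rw [← smul_eq_mul, ← Real.sInf_smul_of_nonneg (Real.sqrt_nonneg n)]
  refine le_csInf ⟨_, _, ⟨D, hD0, rfl⟩, rfl⟩ ?_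
  rintro _ ⟨_, ⟨d, hd, rfl⟩, rfl⟩
  rw [← mul_diagonal_mul_diagonal_div A hD0 d]
  exact condFull_le_sqrt_mul_condFull_mul_diagonal _ hinj hunit fun j ↦ div_ne_zero (hd j) (hD0 j)
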